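/- Under the GFPT1 model, the posterior mean of the random density at a point x = .x_1x_2... ∈ [0,1) equals E[f(x | Y^{(N)}) | Z_{1:m} = z_{1:m}] = Σ_{n=0}^∞ (p(n | z_{1:m})/ℓ_{x_{1:n}}) · ∏_{j=1}^n γ_{x_{1:j}}/(γ_{x_{1:j-1},0} + γ_{x_{1:j-1},1}), where γ_{x_{1:j}} = α_{x_{1:j}} + n_{x_{1:j}}(z_{1:m}) and p(n | z_{1:m}) is the posterior PMF of N. -/

import Mathlib

/-!
Conditionally on `N = n`, the density at `x` is `∏_{j<n} Y_{x_{1:j+1}} / ℓ_{x_{1:n}}`. Along the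
branch of `x` each factor is `Y_{s,0}` or `1 - Y_{s,0}`, so the factors are independent with Beta
means `γ_{x_{1:j+1}} / (γ_{x_{1:j},0} + γ_{x_{1:j},1})`, and the conditional mean of the product is
the product of these means. Averaging over the posterior of `N` gives the series.
-/

open MeasureTheory ProbabilityTheory Finset

/-- Beta function with the convention `B(0,x) = B(x,0) = 1`. -/
noncomputable def betaFn (a b : ℝ) : ℝ :=
  if a = 0 ∨ b = 0 then 1 else ∫ t in Set.Ioo (0 : ℝ) 1, t ^ (a - 1) * (1 - t) ^ (b - 1)

/-- The Beta(a,b) distribution, with the degenerate (Dirac) convention when a parameter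
vanishes. -/
noncomputable def betaMeasure (a b : ℝ) : Measure ℝ :=
  if a = 0 then Measure.dirac 0
  else if b = 0 then Measure.dirac 1
  else (volume.restrict (Set.Ioo (0 : ℝ) 1)).withDensity
    (fun t => ENNReal.ofReal (t ^ (a - 1) * (1 - t) ^ (b - 1) / betaFn a b))

/-- `cnt a ℓ z s` = number of observations `z i` falling in the interval `I_s`. -/
noncomputable def cnt (a ℓ : List Bool → ℝ) {m : ℕ} (z : Fin m → ℝ) (s : List Bool) : ℕ :=
  (Finset.univ.filter (fun i => z i ∈ Set.Ico (a s) (a s + ℓ s))).card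

/-- Prefix of length `n` of an infinite binary sequence. -/
def pre (y : ℕ → Bool) (n : ℕ) : List Bool := List.ofFn (fun i : Fin n => y i)

section Beta

variable {a b : ℝ}

lemma betaFn_eq_beta (ha : 0 < a) (hb : 0 < b) : betaFn a b = ProbabilityTheory.beta a b := by
  have hcast : ∫ t in Set.Ioo (0 : ℝ) 1, (t : ℂ) ^ ((a : ℂ) - 1) * (1 - (t : ℂ)) ^ ((b : ℂ) - 1)
      = ((∫ t in Set.Ioo (0 : ℝ) 1, t ^ (a - 1) * (1 - t) ^ (b - 1) : ℝ) : ℂ) := by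
    rw [← integral_complex_ofReal]
    refine setIntegral_congr_fun measurableSet_Ioo fun t ht => ?_
    rw [Complex.ofReal_mul, Complex.ofReal_cpow ht.1.le,
      Complex.ofReal_cpow (sub_nonneg.mpr ht.2.le)]
    push_cast
    rfl
  rw [beta_eq_betaIntegralReal a b ha hb, Complex.betaIntegral,
    intervalIntegral.integral_of_le zero_le_one, integral_Ioc_eq_integral_Ioo, hcast,
    Complex.ofReal_re, betaFn, if_neg (by simp [ha.ne', hb.ne'])]

lemma betaFn_pos (ha : 0 < a) (hb : 0 < b) : 0 < betaFn a b :=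
  betaFn_eq_beta ha hb ▸ beta_pos ha hb

lemma betaFn_add_one_left (ha : 0 < a) (hb : 0 < b) :
    betaFn (a + 1) b = a / (a + b) * betaFn a b := by
  rw [betaFn_eq_beta (by linarith) hb, betaFn_eq_beta ha hb, ProbabilityTheory.beta,
    ProbabilityTheory.beta, Real.Gamma_add_one ha.ne', add_right_comm,
    Real.Gamma_add_one (by positivity)]
  have := (Real.Gamma_pos_of_pos (add_pos ha hb)).ne'
  field_simp

lemma integral_id_betaMeasure (ha : 0 ≤ a) (hb : 0 ≤ b) (hab : 0 < a + b) :
    ∫ t, t ∂_root_.betaMeasure a b = a / (a + b) := by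
  rcases ha.eq_or_lt with rfl | ha
  · simp [_root_.betaMeasure]
  rcases hb.eq_or_lt with rfl | hb
  · simp [_root_.betaMeasure, ha.ne']
  have hB := betaFn_pos ha hb
  rw [_root_.betaMeasure, if_neg ha.ne', if_neg hb.ne', integral_withDensity_eq_integral_toReal_smul
    (by fun_prop) (ae_of_all _ fun _ => ENNReal.ofReal_lt_top)]
  calc ∫ t in Set.Ioo (0 : ℝ) 1,
        (ENNReal.ofReal (t ^ (a - 1) * (1 - t) ^ (b - 1) / betaFn a b)).toReal • t
      = ∫ t in Set.Ioo (0 : ℝ) 1, t ^ (a + 1 - 1) * (1 - t) ^ (b - 1) / betaFn a b := by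
        refine setIntegral_congr_fun measurableSet_Ioo fun t ht => ?_
        have ht0 : 0 < t := ht.1
        have ht1 : 0 < 1 - t := sub_pos.mpr ht.2
        rw [ENNReal.toReal_ofReal (by positivity), smul_eq_mul, add_sub_cancel_right,
          Real.rpow_sub_one ht0.ne']
        field_simp
    _ = a / (a + b) := by
        have hB1 : betaFn (a + 1) b
            = ∫ t in Set.Ioo (0 : ℝ) 1, t ^ (a + 1 - 1) * (1 - t) ^ (b - 1) :=
          if_neg (by rintro (h | h) <;> linarith)
        rw [integral_div, ← hB1, betaFn_add_one_left ha hb, mul_div_assoc, div_self hB.ne',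
          mul_one]

end Beta

section Branch

variable {Ω : Type*} [MeasurableSpace Ω] {ν : Measure Ω} {Y : List Bool → Ω → ℝ}

lemma pre_succ (y : ℕ → Bool) (n : ℕ) : pre y (n + 1) = pre y n ++ [y n] := by
  rw [pre, pre, List.ofFn_succ']
  simp

lemma pre_injective (y : ℕ → Bool) : Function.Injective (pre y) := fun i j h => by
  simpa [pre] using congrArg List.length h

lemma integral_eq_of_map_eq_betaMeasure {X : Ω → ℝ} (hX : Measurable X) {a b : ℝ}
    (hmap : ν.map X = _root_.betaMeasure a b) (ha : 0 ≤ a) (hb : 0 ≤ b) (hab : 0 < a + b) :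
    ∫ ω, X ω ∂ν = a / (a + b) := by
  calc ∫ ω, X ω ∂ν = ∫ t, t ∂ν.map X :=
        (integral_map hX.aemeasurable aestronglyMeasurable_id).symm
    _ = a / (a + b) := hmap ▸ integral_id_betaMeasure ha hb hab

lemma integral_append_eq_of_map_eq_betaMeasure [IsProbabilityMeasure ν]
    (hmeas : ∀ s, Measurable (Y s)) (hrange : ∀ s ω, Y s ω ∈ Set.Icc (0 : ℝ) 1)
    (hsum : ∀ s ω, Y (s ++ [true]) ω = 1 - Y (s ++ [false]) ω)
    {γ : List Bool → ℝ} (hγ : ∀ s, 0 ≤ γ s) {s : List Bool}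
    (hγs : 0 < γ (s ++ [false]) + γ (s ++ [true]))
    (hmap : ν.map (Y (s ++ [false])) = _root_.betaMeasure (γ (s ++ [false])) (γ (s ++ [true])))
    (d : Bool) :
    ∫ ω, Y (s ++ [d]) ω ∂ν = γ (s ++ [d]) / (γ (s ++ [false]) + γ (s ++ [true])) := by
  have hfalse := integral_eq_of_map_eq_betaMeasure (hmeas _) hmap (hγ _) (hγ _) hγs
  cases d
  · exact hfalse
  · have hint : Integrable (Y (s ++ [false])) ν :=
      .of_mem_Icc 0 1 (hmeas _).aemeasurable (ae_of_all _ (hrange _))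
    simp_rw [hsum]
    rw [integral_sub (integrable_const 1) hint, hfalse, integral_const, probReal_univ, one_smul]
    field_simp
    ring

lemma iIndepFun_branch (hsum : ∀ s ω, Y (s ++ [true]) ω = 1 - Y (s ++ [false]) ω)
    (hind : iIndepFun (m := fun _ : List Bool => (inferInstance : MeasurableSpace ℝ))
      (fun s => Y (s ++ [false])) ν) (y : ℕ → Bool) :
    iIndepFun (fun j ω => Y (pre y (j + 1)) ω) ν := by
  have hflip := ((hind.precomp (pre_injective y)).comp
    (fun j (t : ℝ) => if y j then 1 - t else t) fun j => by split_ifs <;> fun_prop)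
  convert hflip using 1
  funext j ω
  cases h : y j <;> simp [pre_succ, h, hsum]

lemma integral_prod_branch_eq [IsProbabilityMeasure ν]
    (hmeas : ∀ s, Measurable (Y s)) (hrange : ∀ s ω, Y s ω ∈ Set.Icc (0 : ℝ) 1)
    (hsum : ∀ s ω, Y (s ++ [true]) ω = 1 - Y (s ++ [false]) ω)
    (hind : iIndepFun (m := fun _ : List Bool => (inferInstance : MeasurableSpace ℝ))
      (fun s => Y (s ++ [false])) ν)
    {γ : List Bool → ℝ} (hγ : ∀ s, 0 ≤ γ s) (hγsum : ∀ s, 0 < γ (s ++ [false]) + γ (s ++ [true]))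
    (y : ℕ → Bool) {n : ℕ}
    (hmap : ∀ j < n, ν.map (Y (pre y j ++ [false]))
      = _root_.betaMeasure (γ (pre y j ++ [false])) (γ (pre y j ++ [true]))) :
    ∫ ω, ∏ j ∈ range n, Y (pre y (j + 1)) ω ∂ν
      = ∏ j ∈ range n, γ (pre y (j + 1)) / (γ (pre y j ++ [false]) + γ (pre y j ++ [true])) := by
  have hfin := ((iIndepFun_branch hsum hind y).precomp (Fin.val_injective (n := n))
    ).integral_fun_prod_eq_prod_integral fun j => (hmeas _).aestronglyMeasurable
  simp only [prod_range, hfin]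
  refine Fintype.prod_congr _ _ fun j => ?_
  rw [pre_succ]
  exact integral_append_eq_of_map_eq_betaMeasure hmeas hrange hsum hγ (hγsum _) (hmap j j.isLt) _

end Branch

section TotalExpectation

variable {Ω ι : Type*} [MeasurableSpace Ω] {μ : Measure Ω}

lemma setIntegral_eq_measureReal_mul_integral_cond [IsFiniteMeasure μ] (s : Set Ω)
    (f : Ω → ℝ) : ∫ ω in s, f ω ∂μ = μ.real s * ∫ ω, f ω ∂μ[|s] := by
  by_cases hs : μ s = 0
  · simp [Measure.restrict_eq_zero.mpr hs, measureReal_def, hs]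
  · rw [ProbabilityTheory.cond, integral_smul_measure, smul_eq_mul, ENNReal.toReal_inv,
      ← mul_assoc, measureReal_def, mul_inv_cancel₀ (ENNReal.toReal_ne_zero.mpr
        ⟨hs, measure_ne_top μ s⟩), one_mul]

/-- The integrand need not be integrable; if it is not, both sides are `0`. -/
lemma integral_eq_tsum_setIntegral_fiber_of_nonneg [Countable ι] [MeasurableSpace ι]
    [MeasurableSingletonClass ι] {N : Ω → ι} (hN : Measurable N) {f : ι → Ω → ℝ}
    (hf : ∀ i, Measurable (f i)) (hf0 : ∀ i ω, 0 ≤ f i ω)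
    (hint : ∀ i, IntegrableOn (f i) {ω | N ω = i} μ) :
    ∫ ω, f (N ω) ω ∂μ = ∑' i, ∫ ω in {ω | N ω = i}, f i ω ∂μ := by
  have hms : ∀ i, MeasurableSet {ω | N ω = i} := fun i => hN (measurableSet_singleton i)
  have hm : Measurable fun ω => f (N ω) ω :=
    (measurable_from_prod_countable_left (f := fun p : Ω × ι => f p.2 p.1) hf).comp
      (measurable_id.prodMk hN)
  have hU : ⋃ i, {ω | N ω = i} = Set.univ := Set.iUnion_eq_univ_iff.mpr fun ω => ⟨N ω, rfl⟩
  have hpiece : ∀ i, ∫⁻ ω in {ω | N ω = i}, ENNReal.ofReal (f (N ω) ω) ∂μ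
      = ENNReal.ofReal (∫ ω in {ω | N ω = i}, f i ω ∂μ) := fun i => by
    rw [setLIntegral_congr_fun (hms i) fun ω (hω : N ω = i) => by rw [hω],
      ofReal_integral_eq_lintegral_ofReal (hint i) (ae_of_all _ (hf0 i))]
  rw [integral_eq_lintegral_of_nonneg_ae (ae_of_all _ fun ω => hf0 _ ω) hm.aestronglyMeasurable,
    ← setLIntegral_univ, ← hU, lintegral_iUnion hms (pairwise_disjoint_fiber N)]
  simp only [hpiece]
  rw [ENNReal.tsum_toReal_eq fun _ => ENNReal.ofReal_ne_top]
  exact tsum_congr fun i => ENNReal.toReal_ofReal (setIntegral_nonneg (hms i) fun ω _ => hf0 i ω)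

end TotalExpectation

theorem stmt_10_general
    (a ℓ : List Bool → ℝ)
    (hlpos : ∀ s, 0 < ℓ s)
    (α : List Bool → ℝ) (hα : ∀ s, 0 ≤ α s)
    (hαsum : ∀ s, 0 < α (s ++ [false]) + α (s ++ [true]))
    (m : ℕ) (z : Fin m → ℝ)
    -- the posterior distribution of `(N, Y)` given the data, on a probability space:
    {Ω : Type*} [MeasurableSpace Ω] (μ : Measure Ω) [IsProbabilityMeasure μ]
    (N' : Ω → ℕ) (hN' : Measurable N')
    (post : ℕ → ℝ) (hpost : ∀ n, post n = (μ {ω | N' ω = n}).toReal)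
    (Y' : List Bool → Ω → ℝ) (hY'meas : ∀ s, Measurable (Y' s))
    (hY'range : ∀ s ω, Y' s ω ∈ Set.Icc (0 : ℝ) 1)
    (hY'sum : ∀ s ω, Y' (s ++ [true]) ω = 1 - Y' (s ++ [false]) ω)
    (hcondIndep : ∀ n, μ {ω | N' ω = n} ≠ 0 →
      iIndepFun (m := fun _ : List Bool => (inferInstance : MeasurableSpace ℝ))
        (fun s => Y' (s ++ [false])) (μ[|{ω | N' ω = n}]))
    (hcondBeta : ∀ n, μ {ω | N' ω = n} ≠ 0 → ∀ s : List Bool,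
      (μ[|{ω | N' ω = n}]).map (Y' (s ++ [false]))
        = if s.length < n then
            _root_.betaMeasure (α (s ++ [false]) + (cnt a ℓ z (s ++ [false]) : ℝ))
                        (α (s ++ [true]) + (cnt a ℓ z (s ++ [true]) : ℝ))
          else _root_.betaMeasure (α (s ++ [false])) (α (s ++ [true])))
    -- the point `x = .x_1x_2…` with digit sequence `y`:
    (y : ℕ → Bool) :
    ∫ ω, (∏ j ∈ Finset.range (N' ω), Y' (pre y (j + 1)) ω) / ℓ (pre y (N' ω)) ∂μ
      = ∑' n, post n / ℓ (pre y n) *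
          ∏ j ∈ Finset.range n,
            (α (pre y (j + 1)) + (cnt a ℓ z (pre y (j + 1)) : ℝ)) /
              ((α (pre y j ++ [false]) + (cnt a ℓ z (pre y j ++ [false]) : ℝ)) +
                (α (pre y j ++ [true]) + (cnt a ℓ z (pre y j ++ [true]) : ℝ))) := by
  set γ : List Bool → ℝ := fun s => α s + cnt a ℓ z s
  have hγ : ∀ s, 0 ≤ γ s := fun s => add_nonneg (hα s) (Nat.cast_nonneg _)
  have hγsum : ∀ s, 0 < γ (s ++ [false]) + γ (s ++ [true]) := fun s => by
    linarith [hαsum s, (cnt a ℓ z (s ++ [false])).cast_nonneg (α := ℝ),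
      (cnt a ℓ z (s ++ [true])).cast_nonneg (α := ℝ)]
  set G : ℕ → Ω → ℝ := fun n ω => (∏ j ∈ range n, Y' (pre y (j + 1)) ω) / ℓ (pre y n)
  have hG : ∀ n ω, G n ω ∈ Set.Icc 0 (ℓ (pre y n))⁻¹ := fun n ω => by
    rw [← one_div]
    exact ⟨div_nonneg (prod_nonneg fun j _ => (hY'range _ ω).1) (hlpos _).le,
      div_le_div_of_nonneg_right (prod_le_one (fun j _ => (hY'range _ ω).1)
        fun j _ => (hY'range _ ω).2) (hlpos _).le⟩
  have hGmeas : ∀ n, Measurable (G n) := fun n =>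
    (Finset.measurable_prod _ fun j _ => hY'meas _).div_const _
  rw [integral_eq_tsum_setIntegral_fiber_of_nonneg hN' hGmeas (fun n ω => (hG n ω).1)
    fun n => (Integrable.of_mem_Icc _ _ (hGmeas n).aemeasurable (ae_of_all _ (hG n))).integrableOn]
  refine tsum_congr fun n => ?_
  rw [setIntegral_eq_measureReal_mul_integral_cond, hpost, ← measureReal_def]
  by_cases hn : μ {ω | N' ω = n} = 0
  · simp [measureReal_def, hn]
  have := cond_isProbabilityMeasure (μ := μ) hn
  rw [integral_div, integral_prod_branch_eq hY'meas hY'range hY'sum (hcondIndep n hn) hγ hγsum y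
    fun j hj => by rw [hcondBeta n hn, if_pos (by simpa [pre] using hj)]]
  ring

/-- Under the GFPT1 model, the posterior mean of the random density at a
point `x = .x_1x_2… ∈ [0,1)` is
`E[f(x|Y^{(N)}) | Z_{1:m} = z_{1:m}]
  = Σ_{n=0}^∞ (p(n|z)/ℓ_{x_{1:n}}) ∏_{j=1}^n γ_{x_{1:j}}/(γ_{x_{1:j-1},0}+γ_{x_{1:j-1},1})`,
where `γ_s = α_s + n_s(z_{1:m})`.  Here the posterior distribution of `(N, Y)` is
represented on a probability space `(Ω, μ)`: `N'` has PMF the posterior `p(·|z)`, and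
conditionally on `N' = n` the coordinates `Y'_{s,0}` are independent, Beta(γ_{s0},γ_{s1})
distributed up to level `n`, and Beta(α_{s0},α_{s1}) (the prior) beyond level `n`. -/
theorem stmt_10
    (a ℓ : List Bool → ℝ)
    (ha0 : a [] = 0) (hl0 : ℓ [] = 1)
    (hlpos : ∀ s, 0 < ℓ s)
    (haf : ∀ s, a (s ++ [false]) = a s)
    (hat : ∀ s, a (s ++ [true]) = a s + ℓ (s ++ [false]))
    (hll : ∀ s, ℓ s = ℓ (s ++ [false]) + ℓ (s ++ [true]))
    (α : List Bool → ℝ) (hα : ∀ s, 0 ≤ α s)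
    (hαsum : ∀ s, 0 < α (s ++ [false]) + α (s ++ [true]))
    (m : ℕ) (z : Fin m → ℝ) (hz : ∀ i, z i ∈ Set.Ico (0 : ℝ) 1)
    -- the posterior distribution of `(N, Y)` given the data, on a probability space:
    {Ω : Type*} [MeasurableSpace Ω] (μ : Measure Ω) [IsProbabilityMeasure μ]
    (N' : Ω → ℕ) (hN' : Measurable N')
    (post : ℕ → ℝ) (hpost : ∀ n, post n = (μ {ω | N' ω = n}).toReal)
    (Y' : List Bool → Ω → ℝ) (hY'meas : ∀ s, Measurable (Y' s))
    (hY'range : ∀ s ω, Y' s ω ∈ Set.Icc (0 : ℝ) 1)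
    (hY'sum : ∀ s ω, Y' (s ++ [true]) ω = 1 - Y' (s ++ [false]) ω)
    (hcondIndep : ∀ n, μ {ω | N' ω = n} ≠ 0 →
      iIndepFun (m := fun _ : List Bool => (inferInstance : MeasurableSpace ℝ))
        (fun s => Y' (s ++ [false])) (μ[|{ω | N' ω = n}]))
    (hcondBeta : ∀ n, μ {ω | N' ω = n} ≠ 0 → ∀ s : List Bool,
      (μ[|{ω | N' ω = n}]).map (Y' (s ++ [false]))
        = if s.length < n then
            _root_.betaMeasure (α (s ++ [false]) + (cnt a ℓ z (s ++ [false]) : ℝ))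
                        (α (s ++ [true]) + (cnt a ℓ z (s ++ [true]) : ℝ))
          else _root_.betaMeasure (α (s ++ [false])) (α (s ++ [true])))
    -- the point `x = .x_1x_2…` with digit sequence `y`:
    (x : ℝ) (hx : x ∈ Set.Ico (0 : ℝ) 1) (y : ℕ → Bool)
    (hdig : ∀ n, x ∈ Set.Ico (a (pre y n)) (a (pre y n) + ℓ (pre y n))) :
    ∫ ω, (∏ j ∈ Finset.range (N' ω), Y' (pre y (j + 1)) ω) / ℓ (pre y (N' ω)) ∂μ
      = ∑' n, post n / ℓ (pre y n) *
          ∏ j ∈ Finset.range n,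
            (α (pre y (j + 1)) + (cnt a ℓ z (pre y (j + 1)) : ℝ)) /
              ((α (pre y j ++ [false]) + (cnt a ℓ z (pre y j ++ [false]) : ℝ)) +
                (α (pre y j ++ [true]) + (cnt a ℓ z (pre y j ++ [true]) : ℝ))) :=
  stmt_10_general a ℓ hlpos α hα hαsum m z μ N' hN' post hpost Y' hY'meas hY'range hY'sum hcondIndep
    hcondBeta y
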